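/- arXiv:2203.00544 — 2 statements merged into one kernel-verified Lean document; each statement's English description precedes it below -/
import Mathlib

section
/- For every school c in a school-choice instance, the minority-reserve choice function C^MR_c is consistent: for all sets of students S1, S2 with C^MR_c(S1) ⊆ S2 ⊆ S1, one has C^MR_c(S1) = C^MR_c(S2). -/
/-!
Common formalization of school-choice instances with reserved seats
(minority reserve, joint seat allocation, discovery program).

Conventions:
* `prio c s` is the priority rank of student `s` at school `c`
  (smaller value = higher priority); injectivity encodes a strict priority order.
* `pref s o` is the preference rank of outcome `o : Option C` for student `s`
  (smaller value = more preferred); `none` denotes being unmatched, and a school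
  `c` is acceptable to `s` iff `pref s (some c) < pref s none`.
-/

open Finset

structure SchoolChoice (S C : Type*) [Fintype S] [DecidableEq S] [Fintype C] [DecidableEq C] where
  /-- the set of disadvantaged (minority) students; the rest are advantaged -/
  dis : Finset S
  /-- preference rank of each outcome (school or `none` = unmatched) for each student -/
  pref : S → Option C → ℕ
  pref_inj : ∀ s, Function.Injective (pref s)
  /-- priority rank of each student at each school (lower = higher priority) -/
  prio : C → S → ℕ
  prio_inj : ∀ c, Function.Injective (prio c)
  /-- quota of each school -/
  q : C → ℕ
  /-- reservation quota of each school -/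
  qR : C → ℕ
  qR_le : ∀ c, qR c ≤ q c

namespace SchoolChoice

variable {S C : Type*} [Fintype S] [DecidableEq S] [Fintype C] [DecidableEq C]

/-- `max(T, >_c, k)`: the `min(k, |T|)` highest-priority students of `T` at school `c`. -/
def maxSet (I : SchoolChoice S C) (c : C) (T : Finset S) (k : ℕ) : Finset S :=
  T.filter fun s => (T.filter fun t => I.prio c t < I.prio c s).card < k

/-- baseline choice function `C^BASE_c` -/
def CBASE (I : SchoolChoice S C) (c : C) (T : Finset S) : Finset S :=
  I.maxSet c T (I.q c)

/-- `S1^R` of the minority-reserve choice function -/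
def mrRes (I : SchoolChoice S C) (c : C) (T : Finset S) : Finset S :=
  I.maxSet c (T ∩ I.dis) (I.qR c)

/-- minority-reserve choice function `C^MR_c` -/
def CMR (I : SchoolChoice S C) (c : C) (T : Finset S) : Finset S :=
  I.mrRes c T ∪ I.maxSet c (T \ I.mrRes c T) (I.q c - (I.mrRes c T).card)

/-- `S1^G` of the joint-seat-allocation choice function -/
def jsaGen (I : SchoolChoice S C) (c : C) (T : Finset S) : Finset S :=
  I.maxSet c T (I.q c - I.qR c)

/-- `S1^R` of the joint-seat-allocation choice function -/
def jsaRes (I : SchoolChoice S C) (c : C) (T : Finset S) : Finset S :=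
  I.maxSet c ((T ∩ I.dis) \ I.jsaGen c T) (I.qR c)

/-- joint-seat-allocation choice function `C^JSA_c` -/
def CJSA (I : SchoolChoice S C) (c : C) (T : Finset S) : Finset S :=
  I.jsaGen c T ∪ I.jsaRes c T ∪
    I.maxSet c (T \ (I.jsaGen c T ∪ I.jsaRes c T))
      (I.q c - (I.jsaGen c T ∪ I.jsaRes c T).card)

/-- school `c` is acceptable to student `s` -/
def acceptable (I : SchoolChoice S C) (s : S) (c : C) : Prop :=
  I.pref s (some c) < I.pref s none

/-- `μ(c)`: the set of students assigned to school `c` by `μ` -/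
def assigned (I : SchoolChoice S C) (μ : S → Option C) (c : C) : Finset S :=
  Finset.univ.filter fun s => μ s = some c

/-- `μ` is a matching: students are assigned only acceptable schools, quotas respected -/
def IsMatching (I : SchoolChoice S C) (μ : S → Option C) : Prop :=
  (∀ s c, μ s = some c → I.acceptable s c) ∧ ∀ c, (I.assigned μ c).card ≤ I.q c

/-- `μ` is stable w.r.t. the choice functions `Ch`: it is a matching and no pair
`(s, c)` with `c` acceptable to `s` satisfies `c >_s μ(s)` and `s ∈ Ch c (μ(c) ∪ {s})`. -/
def IsStable (I : SchoolChoice S C) (Ch : C → Finset S → Finset S) (μ : S → Option C) : Prop :=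
  I.IsMatching μ ∧
    ∀ s c, I.acceptable s c → I.pref s (some c) < I.pref s (μ s) →
      s ∉ Ch c (insert s (I.assigned μ c))

/-- `μ` is the student-optimal stable matching w.r.t. `Ch`:
stable and weakly preferred by every student to every stable matching. -/
def IsOptStable (I : SchoolChoice S C) (Ch : C → Finset S → Finset S) (μ : S → Option C) :
    Prop :=
  I.IsStable Ch μ ∧ ∀ μ', I.IsStable Ch μ' → ∀ s, I.pref s (μ s) ≤ I.pref s (μ' s)

/-! Restricted (sub)instances, used by the three-stage discovery program: only students
in `A` participate and school `c` has quota `q' c`, with baseline (responsive) choice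
functions. -/

def IsMatchingOn (I : SchoolChoice S C) (A : Finset S) (q' : C → ℕ) (μ : S → Option C) :
    Prop :=
  (∀ s, s ∉ A → μ s = none) ∧
    (∀ s c, μ s = some c → I.acceptable s c) ∧ ∀ c, (I.assigned μ c).card ≤ q' c

def IsStableOn (I : SchoolChoice S C) (A : Finset S) (q' : C → ℕ) (μ : S → Option C) : Prop :=
  I.IsMatchingOn A q' μ ∧
    ∀ s ∈ A, ∀ c : C, I.acceptable s c → I.pref s (some c) < I.pref s (μ s) →
      s ∉ I.maxSet c (insert s (I.assigned μ c)) (q' c)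

def IsOptStableOn (I : SchoolChoice S C) (A : Finset S) (q' : C → ℕ) (μ : S → Option C) :
    Prop :=
  I.IsStableOn A q' μ ∧
    ∀ μ', I.IsStableOn A q' μ' → ∀ s ∈ A, I.pref s (μ s) ≤ I.pref s (μ' s)

/-- `μ` is the discovery-program matching: the union of the three stage matchings
`μ1` (general seats, all students), `μ2` (reserved seats, unmatched disadvantaged
students), `μ3` (vacant reserved seats, unmatched advantaged students). -/
def IsDisc (I : SchoolChoice S C) (μ : S → Option C) : Prop :=
  ∃ μ1 μ2 μ3 : S → Option C,
    I.IsOptStableOn Finset.univ (fun c => I.q c - I.qR c) μ1 ∧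
    I.IsOptStableOn (I.dis.filter fun s => μ1 s = none) I.qR μ2 ∧
    I.IsOptStableOn ((Finset.univ \ I.dis).filter fun s => μ1 s = none)
      (fun c => I.qR c - (I.assigned μ2 c).card) μ3 ∧
    ∀ s, μ s = Option.elim (μ1 s) (Option.elim (μ2 s) (μ3 s) some) some

/-- `(s, c)` is a blocking pair of `μ` for disadvantaged students -/
def BlockDis (I : SchoolChoice S C) (μ : S → Option C) (s : S) (c : C) : Prop :=
  s ∈ I.dis ∧ I.acceptable s c ∧ I.pref s (some c) < I.pref s (μ s) ∧
    ∃ s' ∈ I.assigned μ c, s' ∈ I.dis ∧ I.prio c s < I.prio c s'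

/-- `(s, c)` is a blocking pair of `μ` for advantaged students -/
def BlockAdv (I : SchoolChoice S C) (μ : S → Option C) (s : S) (c : C) : Prop :=
  s ∉ I.dis ∧ I.acceptable s c ∧ I.pref s (some c) < I.pref s (μ s) ∧
    ∃ s' ∈ I.assigned μ c, s' ∉ I.dis ∧ I.prio c s < I.prio c s'

/-- `(s, c)` is an in-group blocking pair of `μ` -/
def InGroupBlock (I : SchoolChoice S C) (μ : S → Option C) (s : S) (c : C) : Prop :=
  I.BlockDis μ s c ∨ I.BlockAdv μ s c

/-- all schools share a common priority order over the students -/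
def CommonPriority (I : SchoolChoice S C) : Prop :=
  ∀ c c' : C, ∀ t u : S, I.prio c t < I.prio c u ↔ I.prio c' t < I.prio c' u

/-- the reservation quotas are a smart reserve w.r.t. the baseline matching `μBase` -/
def SmartReserve (I : SchoolChoice S C) (μBase : S → Option C) : Prop :=
  ∀ c, (I.assigned μBase c ∩ I.dis).card ≤ I.qR c

end SchoolChoice

/-!
Selecting the `k` highest-priority students is consistent: if the students chosen from `T` all
survive in `T' ⊆ T`, then ranks can only drop when passing to `T'`, while a student not chosen
from `T` is still beaten in `T'` by all `k` chosen ones. The minority-reserve choice is two such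
selections in a row: the reserved seats from `S1 ∩ S^m`, which are therefore the same for `S1`
and `S2`, and then the remaining seats from the students left over.
-/

namespace SchoolChoice

variable {S C : Type*} [Fintype S] [DecidableEq S] [Fintype C] [DecidableEq C]
  (I : SchoolChoice S C) (c : C)

def rank (T : Finset S) (s : S) : ℕ := #{t ∈ T | I.prio c t < I.prio c s}

lemma maxSet_eq_filter_rank (T : Finset S) (k : ℕ) :
    I.maxSet c T k = {s ∈ T | I.rank c T s < k} := rfl

lemma rank_le_rank_of_subset {T T' : Finset S} (h : T' ⊆ T) (s : S) :
    I.rank c T' s ≤ I.rank c T s :=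
  card_le_card (filter_subset_filter _ h)

lemma rank_lt_card {T : Finset S} {s : S} (hs : s ∈ T) : I.rank c T s < #T :=
  card_lt_card (filter_ssubset.2 ⟨s, hs, lt_irrefl _⟩)

lemma rank_lt_rank {T : Finset S} {s t : S} (hs : s ∈ T) (h : I.prio c s < I.prio c t) :
    I.rank c T s < I.rank c T t := by
  refine card_lt_card ⟨monotone_filter_right T fun _ _ hu => hu.trans h, fun hsub => ?_⟩
  exact lt_irrefl _ (mem_filter.1 (hsub (mem_filter.2 ⟨hs, h⟩))).2

lemma prio_lt_of_rank_lt {T : Finset S} {s t : S} (ht : t ∈ T)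
    (h : I.rank c T s < I.rank c T t) : I.prio c s < I.prio c t := by
  rcases lt_trichotomy (I.prio c s) (I.prio c t) with hlt | heq | hgt
  · exact hlt
  · exact absurd h (by rw [I.prio_inj c heq]; exact lt_irrefl _)
  · exact absurd h (I.rank_lt_rank c ht hgt).asymm

lemma rank_injOn (T : Finset S) : Set.InjOn (I.rank c T) T := by
  intro s hs t ht h
  by_contra hne
  rcases (I.prio_inj c).ne hne |>.lt_or_gt with hlt | hgt
  · exact (I.rank_lt_rank c hs hlt).ne h
  · exact (I.rank_lt_rank c ht hgt).ne' h

lemma image_rank (T : Finset S) : T.image (I.rank c T) = range #T :=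
  eq_of_subset_of_card_le
    (image_subset_iff.2 fun _ hs => mem_range.2 (I.rank_lt_card c hs))
    (by rw [card_range, card_image_of_injOn (I.rank_injOn c T)])

lemma card_maxSet (T : Finset S) (k : ℕ) : #(I.maxSet c T k) = min k #T := by
  rw [maxSet_eq_filter_rank, ← card_image_of_injOn ((I.rank_injOn c T).mono (filter_subset _ _)),
    ← filter_image (p := (· < k)), image_rank, ← card_range (min k #T)]
  congr 1
  ext
  simp [and_comm]

lemma maxSet_eq_of_subset {T T' : Finset S} {k : ℕ} (hT' : I.maxSet c T k ⊆ T') (hT : T' ⊆ T) :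
    I.maxSet c T' k = I.maxSet c T k := by
  ext s
  simp only [maxSet_eq_filter_rank, mem_filter]
  constructor
  · rintro ⟨hs, hrank⟩
    refine ⟨hT hs, ?_⟩
    by_contra! hk
    have hbeaten : I.maxSet c T k ⊆ {t ∈ T' | I.prio c t < I.prio c s} := fun t ht =>
      mem_filter.2 ⟨hT' ht, I.prio_lt_of_rank_lt c (hT hs) ((mem_filter.1 ht).2.trans_le hk)⟩
    have hfull : k ≤ #(I.maxSet c T k) := by
      rw [card_maxSet]
      exact le_min le_rfl (hk.trans (I.rank_lt_card c (hT hs)).le)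
    exact (hrank.trans_le hfull).not_ge (card_le_card hbeaten)
  · rintro ⟨hs, hrank⟩
    exact ⟨hT' (mem_filter.2 ⟨hs, hrank⟩), (I.rank_le_rank_of_subset c hT s).trans_lt hrank⟩

end SchoolChoice

/-- the minority-reserve choice function is consistent. -/
theorem CMR_consistent {S C : Type*} [Fintype S] [DecidableEq S] [Fintype C] [DecidableEq C]
    (I : SchoolChoice S C) (c : C) (S1 S2 : Finset S)
    (h1 : I.CMR c S1 ⊆ S2) (h2 : S2 ⊆ S1) :
    I.CMR c S1 = I.CMR c S2 := by
  have hRes : I.mrRes c S2 = I.mrRes c S1 := by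
    refine I.maxSet_eq_of_subset c (subset_inter ?_ ?_) (inter_subset_inter_right h2)
    · exact subset_union_left.trans h1
    · exact (filter_subset _ _).trans inter_subset_right
  have hGen : I.maxSet c (S2 \ I.mrRes c S1) (I.q c - #(I.mrRes c S1)) =
      I.maxSet c (S1 \ I.mrRes c S1) (I.q c - #(I.mrRes c S1)) := by
    refine I.maxSet_eq_of_subset c (subset_sdiff.2 ⟨?_, ?_⟩) (sdiff_subset_sdiff h2 le_rfl)
    · exact subset_union_right.trans h1
    · exact disjoint_sdiff_self_left.mono_left (filter_subset _ _)
  simp only [SchoolChoice.CMR, hRes, hGen]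
end

section
/- In any school-choice instance, any matching that is stable with respect to the minority-reserve choice functions {C^MR_c : c ∈ C} (in particular the student-optimal stable matching μ^MR) admits no in-group blocking pairs. -/
/-!
Common formalization of school-choice instances with reserved seats
(minority reserve, joint seat allocation, discovery program).

Conventions:
* `prio c s` is the priority rank of student `s` at school `c`
  (smaller value = higher priority); injectivity encodes a strict priority order.
* `pref s o` is the preference rank of outcome `o : Option C` for student `s`
  (smaller value = more preferred); `none` denotes being unmatched, and a school
  `c` is acceptable to `s` iff `pref s (some c) < pref s none`.
-/

open Finset

/-!
If `(s, c)` were an in-group blocking pair with victim `s'`, consider `T = μ(c) ∪ {s}`, which has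
at most `q_c + 1` students. Either `s` wins a reserved seat, or (since `s` outranks `s'` and both
are in the same group) `s'` does not either; then `s` and `s'` both compete for the remaining
`q_c - |S1^R|` seats among at most one more candidate than seats, and `s`, beating `s'`, is among
the chosen. So `s ∈ C^MR_c(T)`, contradicting stability.
-/

namespace SchoolChoice

variable {S C : Type*} [Fintype S] [DecidableEq S] [Fintype C] [DecidableEq C]

lemma maxSet_subset (I : SchoolChoice S C) (c : C) (A : Finset S) (k : ℕ) :
    I.maxSet c A k ⊆ A :=
  filter_subset _ _

lemma mem_maxSet_of_prio_lt (I : SchoolChoice S C) {c : C} {A : Finset S} {k : ℕ} {s s' : S}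
    (hs : s ∈ A) (hs' : s' ∈ I.maxSet c A k) (hlt : I.prio c s < I.prio c s') :
    s ∈ I.maxSet c A k := by
  rw [maxSet, mem_filter] at hs' ⊢
  refine ⟨hs, lt_of_le_of_lt (card_le_card fun t ht => ?_) hs'.2⟩
  rw [mem_filter] at ht ⊢
  exact ⟨ht.1, ht.2.trans hlt⟩

/-- With at most one candidate more than seats, only the lowest-ranked candidate is rejected. -/
lemma mem_maxSet_of_card_le_succ (I : SchoolChoice S C) {c : C} {A : Finset S} {k : ℕ}
    {s s' : S} (hs : s ∈ A) (hs' : s' ∈ A) (hlt : I.prio c s < I.prio c s')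
    (hA : A.card ≤ k + 1) : s ∈ I.maxSet c A k := by
  refine mem_filter.2 ⟨hs, ?_⟩
  set F := A.filter fun t => I.prio c t < I.prio c s
  have hsF : s ∉ F := fun h => lt_irrefl _ (mem_filter.1 h).2
  have hs'F : s' ∉ F := fun h => lt_asymm hlt (mem_filter.1 h).2
  have hss' : s ≠ s' := by rintro rfl; exact lt_irrefl _ hlt
  have hsub : insert s (insert s' F) ⊆ A :=
    insert_subset hs (insert_subset hs' (filter_subset _ _))
  have hcard := card_le_card hsub
  rw [card_insert_of_notMem (by simp [hss', hsF]), card_insert_of_notMem hs'F] at hcard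
  omega

lemma mem_CMR_of_prio_lt (I : SchoolChoice S C) {c : C} {T : Finset S} {s s' : S}
    (hs : s ∈ T) (hs' : s' ∈ T) (hgroup : s ∈ I.dis ↔ s' ∈ I.dis)
    (hlt : I.prio c s < I.prio c s') (hT : T.card ≤ I.q c + 1) :
    s ∈ I.CMR c T := by
  rw [CMR]
  set R := I.mrRes c T
  by_cases hsR : s ∈ R
  · exact mem_union_left _ hsR
  have hRT : R ⊆ T ∩ I.dis := I.maxSet_subset c _ _
  have hs'R : s' ∉ R := fun hs'R =>
    hsR (I.mem_maxSet_of_prio_lt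
      (mem_inter.2 ⟨hs, hgroup.2 (mem_inter.1 (hRT hs'R)).2⟩) hs'R hlt)
  have hcard : (T \ R).card = T.card - R.card :=
    card_sdiff_of_subset (hRT.trans inter_subset_left)
  exact mem_union_right _ <| I.mem_maxSet_of_card_le_succ
    (mem_sdiff.2 ⟨hs, hsR⟩) (mem_sdiff.2 ⟨hs', hs'R⟩) hlt (by omega)

end SchoolChoice

/-- any matching stable w.r.t. the minority-reserve choice functions
admits no in-group blocking pairs. -/
theorem MR_no_ingroup_blocking {S C : Type*} [Fintype S] [DecidableEq S] [Fintype C] [DecidableEq C]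
    (I : SchoolChoice S C) (μ : S → Option C)
    (hstable : I.IsStable I.CMR μ) (s : S) (c : C) :
    ¬ I.InGroupBlock μ s c := by
  have hT : (insert s (I.assigned μ c)).card ≤ I.q c + 1 :=
    (card_insert_le _ _).trans (Nat.add_le_add_right (hstable.1.2 c) 1)
  have hblocked : ∀ s' ∈ I.assigned μ c, (s ∈ I.dis ↔ s' ∈ I.dis) →
      I.prio c s < I.prio c s' → I.acceptable s c → I.pref s (some c) < I.pref s (μ s) →
      False := fun s' hs' hgroup hlt hacc hpref =>
    hstable.2 s c hacc hpref <| I.mem_CMR_of_prio_lt (mem_insert_self _ _)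
      (mem_insert_of_mem hs') hgroup hlt hT
  rintro (⟨hsd, hacc, hpref, s', hs', hs'd, hlt⟩ | ⟨hsd, hacc, hpref, s', hs', hs'd, hlt⟩)
  · exact hblocked s' hs' (iff_of_true hsd hs'd) hlt hacc hpref
  · exact hblocked s' hs' (iff_of_false hsd hs'd) hlt hacc hpref
end
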